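/- arXiv:2202.01489 — 4 statements merged into one kernel-verified Lean document; each statement's English description precedes it below -/
import Mathlib

section
/- Fix σ_W², β > 0 and 0 < α < 1, and set D(M) = β·M^{-α}. Then the Gaussian rate loss L_N(D(M)) = ((M-1)/2)·log(1/(1 − (σ_W²/M)(1/D(M) − 1/σ_X²))) satisfies L_N(D(M)) / (γ·M^α) → 1 as M → ∞, where γ = σ_W²/(2β). -/
/-!
Since `log (1 / (1 - x)) ~ x` as `x → 0`, and the argument
`x_M = (σW²/M)(M^α/β - 1/σX²) ~ (σW²/β) M^(α-1)` tends to `0` because `α < 1`, the rate loss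
satisfies `L_N(D(M)) ~ ((M - 1)/2) (σW²/β) M^(α-1) ~ γ M^α`.
-/

open Asymptotics Filter Topology

theorem Real.isEquivalent_log_one_div_one_sub :
    (fun x : ℝ => Real.log (1 / (1 - x))) ~[𝓝 0] id := by
  have h : HasDerivAt (fun x : ℝ => Real.log (1 / (1 - x))) 1 0 := by
    simpa using ((hasDerivAt_id (0 : ℝ)).const_sub 1).inv (by norm_num) |>.log (by norm_num)
  simpa using! h.isLittleO

theorem isEquivalent_natCast_sub_const (c : ℝ) :
    (fun M : ℕ => (M : ℝ) - c) ~[atTop] fun M => (M : ℝ) := by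
  simpa [sub_eq_add_neg] using IsEquivalent.refl.add_const_of_norm_tendsto_atTop (c := -c)
    (tendsto_norm_atTop_atTop.comp tendsto_natCast_atTop_atTop)

noncomputable def gaussianRateLossArg (σX2 σW2 D M : ℝ) : ℝ := σW2 / M * (1 / D - 1 / σX2)

theorem isEquivalent_gaussianRateLossArg (σX2 σW2 : ℝ) {β α : ℝ} (hβ : β ≠ 0) (hα : 0 < α) :
    (fun M : ℕ => gaussianRateLossArg σX2 σW2 (β * (M : ℝ) ^ (-α)) M) ~[atTop]
      fun M => σW2 / β * (M : ℝ) ^ (α - 1) := by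
  have hpow : Tendsto (fun M : ℕ => ‖(M : ℝ) ^ α / β‖) atTop atTop := by
    refine (((tendsto_rpow_atTop hα).comp tendsto_natCast_atTop_atTop).atTop_div_const
      (abs_pos.mpr hβ)).congr' ?_
    filter_upwards with M
    simp [norm_div, abs_of_nonneg (Real.rpow_nonneg (Nat.cast_nonneg M) α)]
  have hdiff : (fun M : ℕ => (M : ℝ) ^ α / β - 1 / σX2) ~[atTop] fun M => (M : ℝ) ^ α / β :=
    IsEquivalent.refl.add_const_of_norm_tendsto_atTop hpow
  refine (((IsEquivalent.refl (u := fun M : ℕ => σW2 / M)).mul hdiff).congr_left ?_).congr_right ?_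
  · filter_upwards with M
    simp [gaussianRateLossArg, Real.rpow_neg (Nat.cast_nonneg M), div_eq_mul_inv]
  · filter_upwards [eventually_gt_atTop 0] with M hM
    simp only [Pi.mul_apply, Real.rpow_sub_one (Nat.cast_ne_zero.mpr hM.ne')]
    ring

theorem gaussian_rate_loss_asymptotic_sublinear_general
    (σX2 σW2 β α : ℝ) (hσW : 0 < σW2) (hβ : 0 < β)
    (hα1 : 0 < α) (hα2 : α < 1) :
    Tendsto
      (fun M : ℕ =>
        (((M : ℝ) - 1) / 2 *
            Real.log (1 / (1 - σW2 / M * (1 / (β * (M : ℝ) ^ (-α)) - 1 / σX2)))) /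
          (σW2 / (2 * β) * (M : ℝ) ^ α))
      atTop (nhds 1) := by
  have harg := isEquivalent_gaussianRateLossArg σX2 σW2 hβ.ne' hα1
  have hsmall : Tendsto (fun M : ℕ => σW2 / β * (M : ℝ) ^ (α - 1)) atTop (𝓝 0) := by
    simpa using ((tendsto_rpow_neg_atTop (by linarith : 0 < 1 - α)).comp
      tendsto_natCast_atTop_atTop).const_mul (σW2 / β)
  have hlog := Real.isEquivalent_log_one_div_one_sub.comp_tendsto (harg.symm.tendsto_nhds hsmall)
  have hhalf := (isEquivalent_natCast_sub_const 1).div (IsEquivalent.refl (u := fun _ => (2 : ℝ)))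
  have hloss := (hhalf.mul (hlog.trans harg)).congr_right
      (w := fun M : ℕ => σW2 / (2 * β) * (M : ℝ) ^ α) (by
    filter_upwards [eventually_gt_atTop 0] with M hM
    simp only [Pi.mul_apply, Pi.div_apply, Real.rpow_sub_one (Nat.cast_ne_zero.mpr hM.ne')]
    field_simp)
  refine (isEquivalent_iff_tendsto_one ?_).mp hloss
  filter_upwards [eventually_gt_atTop 0] with M hM
  positivity

/-- With `D(M) = β M^{-α}`, `0 < α < 1`, the Gaussian rate loss is asymptotically
equivalent to `γ M^α` with `γ = σW²/(2β)`. -/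
theorem gaussian_rate_loss_asymptotic_sublinear
    (σX2 σW2 β α : ℝ) (hσX : 0 < σX2) (hσW : 0 < σW2) (hβ : 0 < β)
    (hα1 : 0 < α) (hα2 : α < 1) :
    Tendsto
      (fun M : ℕ =>
        (((M : ℝ) - 1) / 2 *
            Real.log (1 / (1 - σW2 / M * (1 / (β * (M : ℝ) ^ (-α)) - 1 / σX2)))) /
          (σW2 / (2 * β) * (M : ℝ) ^ α))
      atTop (nhds 1) :=
  gaussian_rate_loss_asymptotic_sublinear_general σX2 σW2 β α hσW hβ hα1 hα2
end

section
/- Fix σ_W², β > 0 with β > σ_W², and set D(M) = β/M. Then the Gaussian rate loss L_N(D(M)) = ((M-1)/2)·log(1/(1 − (σ_W²/M)(M/β − 1/σ_X²))) satisfies L_N(D(M))/M → (1/2)·log(β/(β − σ_W²)) as M → ∞. -/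
/-!
For `M ≠ 0` the argument of the logarithm is `1 - σW²/β + σW²/(σX² M)`, which tends to
`1 - σW²/β = (β - σW²)/β`; so the logarithm tends to `log (β/(β - σW²))`, while the
prefactor `(M - 1)/(2M)` tends to `1/2`.
-/

open Filter Topology

lemma one_sub_div_mul_div_sub_one_div {a b c x : ℝ} (hx : x ≠ 0) :
    1 - a / x * (x / b - 1 / c) = 1 - a / b + a / c / x := by
  field_simp
  ring

lemma tendsto_natCast_sub_one_div_two_mul_div {f : ℕ → ℝ} {L : ℝ}
    (hf : Tendsto f atTop (𝓝 L)) :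
    Tendsto (fun M : ℕ => ((M : ℝ) - 1) / 2 * f M / M) atTop (𝓝 (1 / 2 * L)) := by
  have hfrac : Tendsto (fun M : ℕ => 1 - 1 / (M : ℝ)) atTop (𝓝 (1 - 0)) :=
    tendsto_const_nhds.sub tendsto_one_div_atTop_nhds_zero_nat
  have hprod := hfrac.mul (hf.const_mul (1 / 2))
  rw [sub_zero, one_mul] at hprod
  refine hprod.congr' ?_
  filter_upwards [eventually_ne_atTop 0] with M hM
  have hM' : (M : ℝ) ≠ 0 := Nat.cast_ne_zero.mpr hM
  field_simp

theorem gaussian_rate_loss_asymptotic_linear_general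
    (σX2 σW2 β : ℝ) (hσW : 0 < σW2) (hβ : σW2 < β) :
    Tendsto
      (fun M : ℕ =>
        (((M : ℝ) - 1) / 2 *
            Real.log (1 / (1 - σW2 / M * ((M : ℝ) / β - 1 / σX2)))) / (M : ℝ))
      atTop (nhds (1 / 2 * Real.log (β / (β - σW2)))) := by
  have hβ0 : β ≠ 0 := (hσW.trans hβ).ne'
  have hlimit : 1 - σW2 / β = (β - σW2) / β := one_sub_div hβ0
  have hlimit_ne : 1 - σW2 / β ≠ 0 := hlimit ▸ div_ne_zero (sub_ne_zero.mpr hβ.ne') hβ0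
  have harg : Tendsto (fun M : ℕ => 1 - σW2 / β + σW2 / σX2 / M) atTop
      (𝓝 (1 - σW2 / β)) := by
    simpa using tendsto_const_nhds.add (tendsto_const_div_atTop_nhds_zero_nat (σW2 / σX2))
  have hlog : Tendsto (fun M : ℕ => Real.log (1 / (1 - σW2 / β + σW2 / σX2 / M))) atTop
      (𝓝 (Real.log (β / (β - σW2)))) := by
    simpa only [one_div, hlimit, inv_div] using
      (harg.inv₀ hlimit_ne).log (inv_ne_zero hlimit_ne)
  refine (tendsto_natCast_sub_one_div_two_mul_div hlog).congr' ?_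
  filter_upwards [eventually_ne_atTop 0] with M hM
  rw [one_sub_div_mul_div_sub_one_div (Nat.cast_ne_zero.mpr hM)]

/-- With `D(M) = β/M`, `β > σW²`, the Gaussian rate loss satisfies
`L_N(D(M))/M → (1/2) log(β/(β − σW²))`. -/
theorem gaussian_rate_loss_asymptotic_linear
    (σX2 σW2 β : ℝ) (hσX : 0 < σX2) (hσW : 0 < σW2) (hβ : σW2 < β) :
    Tendsto
      (fun M : ℕ =>
        (((M : ℝ) - 1) / 2 *
            Real.log (1 / (1 - σW2 / M * ((M : ℝ) / β - 1 / σX2)))) / (M : ℝ))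
      atTop (nhds (1 / 2 * Real.log (β / (β - σW2)))) :=
  gaussian_rate_loss_asymptotic_linear_general σX2 σW2 β hσW hβ
end

section
/- Fix M ≥ 2 and σ_X², σ_W² > 0, let D₀ = σ_X²σ_W²/(Mσ_X²+σ_W²) be the minimal distortion, and set D = D₀ + δ. Then as δ → 0⁺, the Gaussian rate loss satisfies L_N(D₀+δ) − ((M−1)/2)·log(1/δ) → ((M−1)/2)·log(Mσ_W²σ_X⁴/(Mσ_X²+σ_W²)²). In particular L_N(D₀+δ)/(((M−1)/2)·log(1/δ)) → 1. -/
/-!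
At `D = D₀ + δ` the argument of the logarithm in `L_N` collapses to
`δ / q(δ)` with `q(δ) = M σX² (D₀ + δ) / (M σX² + σW²)`, so
`L_N(D₀ + δ) − ((M−1)/2) log(1/δ) = ((M−1)/2) log q(δ)`, which tends to
`((M−1)/2) log q(0)` by continuity. Since `log(1/δ) → ∞`, the ratio tends to `1`.
-/

open Filter Topology

section RateLoss

variable {m a b : ℝ}

theorem one_sub_div_mul_inv_sub_inv_eq (hm : 0 < m) (ha : 0 < a) (hb : 0 < b) {δ : ℝ}
    (hδ : 0 < δ) :
    1 - b / m * (1 / (a * b / (m * a + b) + δ) - 1 / a) =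
      δ / (m * a * (a * b / (m * a + b) + δ) / (m * a + b)) := by
  have hS : 0 < m * a + b := by positivity
  have hD : 0 < a * b / (m * a + b) + δ := by positivity
  field_simp
  ring

theorem log_rateLoss_arg_sub_log_inv (hm : 0 < m) (ha : 0 < a) (hb : 0 < b) {δ : ℝ}
    (hδ : 0 < δ) :
    Real.log (1 / (1 - b / m * (1 / (a * b / (m * a + b) + δ) - 1 / a))) -
        Real.log (1 / δ) =
      Real.log (m * a * (a * b / (m * a + b) + δ) / (m * a + b)) := by
  have hq : 0 < m * a * (a * b / (m * a + b) + δ) / (m * a + b) := by positivity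
  rw [one_sub_div_mul_inv_sub_inv_eq hm ha hb hδ, one_div_div,
    Real.log_div hq.ne' hδ.ne', one_div, Real.log_inv]
  ring

theorem tendsto_log_rateLoss_arg_sub_log_inv (hm : 0 < m) (ha : 0 < a) (hb : 0 < b) :
    Tendsto
      (fun δ => Real.log (1 / (1 - b / m * (1 / (a * b / (m * a + b) + δ) - 1 / a))) -
        Real.log (1 / δ))
      (𝓝[>] 0) (𝓝 (Real.log (m * b * a ^ 2 / (m * a + b) ^ 2))) := by
  have hS : 0 < m * a + b := by positivity
  have hq₀ : m * a * (a * b / (m * a + b) + 0) / (m * a + b) =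
      m * b * a ^ 2 / (m * a + b) ^ 2 := by
    rw [add_zero]
    field_simp
  have hcont : ContinuousAt
      (fun δ => Real.log (m * a * (a * b / (m * a + b) + δ) / (m * a + b))) 0 :=
    ContinuousAt.log (by fun_prop) (by rw [hq₀]; positivity)
  have hlim := hcont.tendsto.mono_left (nhdsWithin_le_nhds (s := Set.Ioi 0))
  rw [hq₀] at hlim
  refine hlim.congr' ?_
  filter_upwards [self_mem_nhdsWithin] with δ hδ
  exact (log_rateLoss_arg_sub_log_inv hm ha hb hδ).symm

end RateLoss

theorem tendsto_div_one_of_tendsto_sub_of_tendsto_atTop {α : Type*} {l : Filter α}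
    {f g : α → ℝ} {L : ℝ} (hfg : Tendsto (fun x => f x - g x) l (𝓝 L))
    (hg : Tendsto g l atTop) :
    Tendsto (fun x => f x / g x) l (𝓝 1) := by
  have h := (hfg.div_atTop hg).add_const 1
  rw [zero_add] at h
  refine h.congr' ?_
  filter_upwards [hg.eventually_gt_atTop 0] with x hx
  field_simp
  ring

/-- Expansion of the Gaussian rate loss around the minimal distortion
`D₀ = σX²σW²/(MσX²+σW²)`: as `δ → 0⁺`,
`L_N(D₀+δ) − ((M−1)/2) log(1/δ) → ((M−1)/2) log(MσW²σX⁴/(MσX²+σW²)²)`, and in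
particular `L_N(D₀+δ)` is asymptotically equivalent to `((M−1)/2) log(1/δ)`. -/
theorem gaussian_rate_loss_small_delta
    (M : ℕ) (hM : 2 ≤ M) (σX2 σW2 : ℝ) (hσX : 0 < σX2) (hσW : 0 < σW2) :
    Tendsto
      (fun δ : ℝ =>
        ((M : ℝ) - 1) / 2 *
            Real.log (1 / (1 - σW2 / M *
              (1 / (σX2 * σW2 / (M * σX2 + σW2) + δ) - 1 / σX2))) -
          ((M : ℝ) - 1) / 2 * Real.log (1 / δ))
      (nhdsWithin 0 (Set.Ioi 0))
      (nhds (((M : ℝ) - 1) / 2 *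
        Real.log (M * σW2 * σX2 ^ 2 / (M * σX2 + σW2) ^ 2))) ∧
    Tendsto
      (fun δ : ℝ =>
        (((M : ℝ) - 1) / 2 *
            Real.log (1 / (1 - σW2 / M *
              (1 / (σX2 * σW2 / (M * σX2 + σW2) + δ) - 1 / σX2)))) /
          (((M : ℝ) - 1) / 2 * Real.log (1 / δ)))
      (nhdsWithin 0 (Set.Ioi 0)) (nhds 1) := by
  have hM' : (2 : ℝ) ≤ M := by exact_mod_cast hM
  have hc : 0 < ((M : ℝ) - 1) / 2 := by linarith
  have hdiff : Tendsto
      (fun δ : ℝ =>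
        ((M : ℝ) - 1) / 2 *
            Real.log (1 / (1 - σW2 / M *
              (1 / (σX2 * σW2 / (M * σX2 + σW2) + δ) - 1 / σX2))) -
          ((M : ℝ) - 1) / 2 * Real.log (1 / δ))
      (𝓝[>] 0)
      (𝓝 (((M : ℝ) - 1) / 2 * Real.log (M * σW2 * σX2 ^ 2 / (M * σX2 + σW2) ^ 2))) := by
    simpa only [mul_sub] using
      (tendsto_log_rateLoss_arg_sub_log_inv (by linarith) hσX hσW).const_mul (((M : ℝ) - 1) / 2)
  have hlog :
      Tendsto (fun δ : ℝ => ((M : ℝ) - 1) / 2 * Real.log (1 / δ)) (𝓝[>] 0) atTop := by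
    simpa only [one_div, Function.comp_def] using
      (Real.tendsto_log_atTop.comp tendsto_inv_nhdsGT_zero).const_mul_atTop hc
  exact ⟨hdiff, tendsto_div_one_of_tendsto_sub_of_tendsto_atTop hdiff hlog⟩
end

section
/- Fix M ≥ 2, σ_X², σ_W² > 0 and let D₀ = σ_X²(σ_W²/M)/(σ_X² + σ_W²/M). Suppose g(δ) = (1/2)log(σ_X²/N_V) + (M/2)log(1/(1 − (σ_W²/M)(1/(D₀+δ) − 1/σ_X²))) − (1/2)log((D₀+δ)/(D₀+δ − m)) for positive constants N_V ≤ σ_X² and m ≤ D₀. Then g(δ)/((M/2)·log(1/δ)) → 1 as δ → 0⁺. -/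
/-!
Writing `s = σW²/M`, the argument of the second logarithm collapses: `1 - s (1/(D₀+δ) - 1/σX²)`
equals `δ (σX² + s) / ((D₀+δ) σX²)`, because `1/D₀ = 1/s + 1/σX²`. Hence `g(δ)` is
`(M/2) log(1/δ)` plus a remainder that is continuous at `δ = 0` (this is where `m < D₀` enters),
and a bounded remainder is negligible against `log(1/δ) → ∞`.
-/

open Filter Real Topology

theorem tendsto_div_of_tendsto_sub_of_tendsto_atTop {α : Type*} {l : Filter α} {f g : α → ℝ}
    {L : ℝ} (hg : Tendsto g l atTop) (hfg : Tendsto (fun x => f x - g x) l (𝓝 L)) :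
    Tendsto (fun x => f x / g x) l (𝓝 1) := by
  have hlim := (tendsto_const_nhds (x := (1 : ℝ))).add (hfg.div_atTop hg)
  rw [add_zero] at hlim
  refine hlim.congr' ?_
  filter_upwards [hg.eventually_gt_atTop 0] with x hx
  rw [sub_div, div_self hx.ne', add_sub_cancel]

theorem tendsto_log_one_div_nhdsGT_zero : Tendsto (fun δ => log (1 / δ)) (𝓝[>] 0) atTop := by
  simpa only [one_div, log_inv] using tendsto_neg_atTop_iff.mpr tendsto_log_nhdsGT_zero

theorem one_sub_mul_inv_sub_inv_eq {a s D : ℝ} (ha : a ≠ 0) (has : a + s ≠ 0) (hD : D ≠ 0) :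
    1 - s * (1 / D - 1 / a) = (D - a * s / (a + s)) * ((a + s) / (D * a)) := by
  field_simp
  ring

theorem log_inv_one_sub_mul_inv_sub_inv {a s δ : ℝ} (ha : 0 < a) (hs : 0 ≤ s) (hδ : 0 < δ) :
    log (1 / (1 - s * (1 / (a * s / (a + s) + δ) - 1 / a))) =
      log (1 / δ) + log ((a * s / (a + s) + δ) * a / (a + s)) := by
  have hD : 0 < a * s / (a + s) + δ := by positivity
  rw [one_sub_mul_inv_sub_inv_eq ha.ne' (by positivity) hD.ne', add_sub_cancel_left,
    ← log_mul (by positivity) (by positivity)]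
  congr 1
  field_simp

theorem rate_loss_upper_bound_small_delta_general
    (M : ℕ) (hM : 2 ≤ M) (σX2 σW2 NV m : ℝ)
    (hσX : 0 < σX2) (hσW : 0 < σW2)
    (hm2 : m < σX2 * (σW2 / M) / (σX2 + σW2 / M)) :
    Tendsto
      (fun δ : ℝ =>
        (1 / 2 * Real.log (σX2 / NV) +
            (M : ℝ) / 2 * Real.log (1 / (1 - σW2 / M *
              (1 / (σX2 * (σW2 / M) / (σX2 + σW2 / M) + δ) - 1 / σX2))) -
            1 / 2 * Real.log ((σX2 * (σW2 / M) / (σX2 + σW2 / M) + δ) /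
              (σX2 * (σW2 / M) / (σX2 + σW2 / M) + δ - m))) /
          ((M : ℝ) / 2 * Real.log (1 / δ)))
      (nhdsWithin 0 (Set.Ioi 0)) (nhds 1) := by
  have hMpos : (0 : ℝ) < M := by exact_mod_cast (by omega : 0 < M)
  set s := σW2 / M
  set D₀ := σX2 * s / (σX2 + s)
  have hs : 0 < s := by positivity
  have hD₀m : 0 < D₀ - m := by linarith
  have hrem : ContinuousAt (fun δ => 1 / 2 * log (σX2 / NV) +
      (M : ℝ) / 2 * log ((D₀ + δ) * σX2 / (σX2 + s)) - 1 / 2 * log ((D₀ + δ) / (D₀ + δ - m))) 0 := by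
    fun_prop (disch := simp only [add_zero]; positivity)
  refine tendsto_div_of_tendsto_sub_of_tendsto_atTop
    (tendsto_log_one_div_nhdsGT_zero.const_mul_atTop (by positivity))
    ((hrem.tendsto.mono_left nhdsWithin_le_nhds).congr' ?_)
  filter_upwards [self_mem_nhdsWithin] with δ (hδ : 0 < δ)
  rw [log_inv_one_sub_mul_inv_sub_inv hσX hs.le hδ]
  ring

/-- For fixed `M`, as the distortion approaches the minimal distortion
`D₀ = σX²(σW²/M)/(σX²+σW²/M)` from above, the rate-loss upper bound `g(δ)` is
asymptotically equivalent to `(M/2) log(1/δ)`. -/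
theorem rate_loss_upper_bound_small_delta
    (M : ℕ) (hM : 2 ≤ M) (σX2 σW2 NV m : ℝ)
    (hσX : 0 < σX2) (hσW : 0 < σW2)
    (hNV : 0 < NV) (hNV2 : NV ≤ σX2)
    (hm : 0 < m) (hm2 : m < σX2 * (σW2 / M) / (σX2 + σW2 / M)) :
    Tendsto
      (fun δ : ℝ =>
        (1 / 2 * Real.log (σX2 / NV) +
            (M : ℝ) / 2 * Real.log (1 / (1 - σW2 / M *
              (1 / (σX2 * (σW2 / M) / (σX2 + σW2 / M) + δ) - 1 / σX2))) -
            1 / 2 * Real.log ((σX2 * (σW2 / M) / (σX2 + σW2 / M) + δ) /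
              (σX2 * (σW2 / M) / (σX2 + σW2 / M) + δ - m))) /
          ((M : ℝ) / 2 * Real.log (1 / δ)))
      (nhdsWithin 0 (Set.Ioi 0)) (nhds 1) :=
  rate_loss_upper_bound_small_delta_general M hM σX2 σW2 NV m hσX hσW hm2
end
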